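/- Let A, B be tadpole matrices with head parameters k ≠ 0 and ℓ = p − k (so AB is diagonal). Then σ(A)·σ(B) equals the set of all p²-th roots of unity {1, ξ, ξ², …, ξ^{p²−1}}. -/

import Mathlib

open Matrix

/-- The `p × p` cyclic permutation matrix. -/
def cycleMatrix (p : ℕ) : Matrix (Fin p) (Fin p) ℂ :=
  Matrix.of fun i j => if (j : ℕ) = ((i : ℕ) + 1) % p then 1 else 0

/-- The fixed primitive `p²`-th root of unity `ξ = e^{2πi/p²}`. -/
noncomputable def xi (p : ℕ) : ℂ := Complex.exp (2 * Real.pi * Complex.I / (p ^ 2))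

/-- The tadpole matrix with head `D C^k` (where `D = diagonal d`) and tail
`diag(ξ^{0·k + a_0 p}, ξ^{1·k + a_1 p}, …, ξ^{(p-1)k + a_{p-1} p})`.
We index the `2p × 2p` matrix by `Fin p ⊕ Fin p`. -/
noncomputable def tadpole (p : ℕ) (d : Fin p → ℂ) (k : ℕ) (a : Fin p → ℕ) :
    Matrix (Fin p ⊕ Fin p) (Fin p ⊕ Fin p) ℂ :=
  Matrix.fromBlocks (Matrix.diagonal d * cycleMatrix p ^ k) 0 0
    (Matrix.diagonal fun j : Fin p => xi p ^ ((j : ℕ) * k + a j * p))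

/-- Membership in the set `𝒯` of tadpole matrices: `D` is unitary diagonal of
determinant one, `k ∈ {0, …, p-1}`, `a_j ∈ {0, …, p-1}` and `a_0 = 0` (so the first
tail entry is `1`). -/
def IsTadpole (p : ℕ) (A : Matrix (Fin p ⊕ Fin p) (Fin p ⊕ Fin p) ℂ) : Prop :=
  ∃ (d : Fin p → ℂ) (k : ℕ) (a : Fin p → ℕ),
    (∀ i, ‖d i‖ = 1) ∧ (∏ i, d i = 1) ∧ k < p ∧ (∀ j, a j < p) ∧
    (∀ j : Fin p, (j : ℕ) = 0 → a j = 0) ∧ A = tadpole p d k a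

/-! The head `D * C ^ k` satisfies `(D * C ^ k) ^ p = (∏ d) • 1`, since `t ↦ i + t k` permutes
`Fin p` when `k` is prime to `p`, and conjugation by `diag (ζ ^ i)`, `ζ` a primitive `p`-th root of
unity, multiplies it by `ζ ^ k`. So its spectrum is a nonempty set of `p`-th roots of `∏ d = 1`
stable under multiplication by a primitive `p`-th root of unity: all of them. The tail entries
`ξ ^ (j ℓ + b j p)` of `B` have `p`-th powers `(ξ ^ (p ℓ)) ^ j`, which run through all `p`-th roots
of unity; hence every `p²`-th root of unity `x` is `(x / v) * v` with `v` in the tail of `B` and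
`x / v` in the head spectrum of `A`. -/
section CyclicShift

open Fin.NatCast

variable {p : ℕ} [NeZero p]

lemma cycleMatrix_apply (i j : Fin p) : cycleMatrix p i j = if j = i + 1 then 1 else 0 := by
  simp [cycleMatrix, Fin.ext_iff, Fin.val_add]

lemma cycleMatrix_pow_apply (m : ℕ) (i j : Fin p) :
    (cycleMatrix p ^ m) i j = if j = i + (m : Fin p) then 1 else 0 := by
  induction m generalizing j with
  | zero => simp [one_apply, eq_comm]
  | succ m ih =>
    rw [pow_succ, mul_apply]
    simp only [ih, cycleMatrix_apply, ite_mul, one_mul, zero_mul, Finset.sum_ite_eq',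
      Finset.mem_univ, if_true]
    simp [add_assoc]

lemma diagonal_mul_cycleMatrix_pow_apply (d : Fin p → ℂ) (k : ℕ) (i j : Fin p) :
    (diagonal d * cycleMatrix p ^ k) i j = if j = i + (k : Fin p) then d i else 0 := by
  simp [diagonal_mul, cycleMatrix_pow_apply]

lemma diagonal_mul_cycleMatrix_pow_pow_apply (d : Fin p → ℂ) (k m : ℕ) (i j : Fin p) :
    ((diagonal d * cycleMatrix p ^ k) ^ m) i j =
      if j = i + ((m * k : ℕ) : Fin p) then ∏ t ∈ Finset.range m, d (i + ((t * k : ℕ) : Fin p))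
      else 0 := by
  induction m generalizing j with
  | zero => simp [one_apply, eq_comm]
  | succ m ih =>
    rw [pow_succ, mul_apply]
    simp only [ih, diagonal_mul_cycleMatrix_pow_apply, ite_mul, zero_mul, Finset.sum_ite_eq',
      Finset.mem_univ, if_true]
    simp [Finset.prod_range_succ, add_mul, add_assoc]

lemma bijective_add_natCast_mul {k : ℕ} (hk : k.Coprime p) (i : Fin p) :
    Function.Bijective fun t : Fin p => i + (((t : ℕ) * k : ℕ) : Fin p) := by
  refine Finite.injective_iff_bijective.mp fun t₁ t₂ h => Fin.ext ?_
  have hmod : (t₁ : ℕ) * k ≡ (t₂ : ℕ) * k [MOD p] := by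
    unfold Nat.ModEq
    simpa [Fin.ext_iff, Fin.val_natCast] using add_left_cancel h
  exact (hmod.cancel_right_of_coprime (Nat.coprime_comm.mp hk)).eq_of_lt_of_lt t₁.isLt t₂.isLt

lemma prod_range_add_natCast_mul {k : ℕ} (hk : k.Coprime p) (d : Fin p → ℂ) (i : Fin p) :
    ∏ t ∈ Finset.range p, d (i + ((t * k : ℕ) : Fin p)) = ∏ j, d j := by
  rw [← Fin.prod_univ_eq_prod_range fun t => d (i + ((t * k : ℕ) : Fin p))]
  exact Fintype.prod_bijective _ (bijective_add_natCast_mul hk i) _ _ fun _ => rfl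

lemma diagonal_mul_cycleMatrix_pow_pow_self {k : ℕ} (hk : k.Coprime p) (d : Fin p → ℂ) :
    (diagonal d * cycleMatrix p ^ k) ^ p = algebraMap ℂ (Matrix (Fin p) (Fin p) ℂ) (∏ j, d j) := by
  ext i j
  rw [diagonal_mul_cycleMatrix_pow_pow_apply, prod_range_add_natCast_mul hk]
  simp [Fin.natCast_eq_zero.mpr (dvd_mul_right p k), algebraMap_eq_diagonal, diagonal_apply,
    eq_comm]

lemma diagonal_mul_cycleMatrix_pow_mul_diagonal {ζ : ℂ} (hζ : ζ ^ p = 1) (d : Fin p → ℂ) (k : ℕ) :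
    diagonal d * cycleMatrix p ^ k * diagonal (fun i : Fin p => ζ ^ (i : ℕ)) =
      ζ ^ k • (diagonal (fun i : Fin p => ζ ^ (i : ℕ)) * (diagonal d * cycleMatrix p ^ k)) := by
  ext i j
  rw [mul_diagonal, diagonal_mul_cycleMatrix_pow_apply, Matrix.smul_apply, diagonal_mul,
    diagonal_mul_cycleMatrix_pow_apply]
  split_ifs with h
  · rw [h, Fin.val_add, Fin.val_natCast, Nat.add_mod_mod, ← pow_eq_pow_mod _ hζ, smul_eq_mul]
    ring
  · simp

end CyclicShift

section Spectrum

variable {K : Type*} [Field K]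

lemma spectrum_fromBlocks_zero₁₂ {m n : Type*} [Fintype m] [DecidableEq m] [Fintype n]
    [DecidableEq n] (A : Matrix m m K) (C : Matrix n m K) (D : Matrix n n K) :
    spectrum K (fromBlocks A 0 C D) = spectrum K A ∪ spectrum K D := by
  ext x
  simp only [Set.mem_union, mem_spectrum_iff_isRoot_charpoly, charpoly_fromBlocks_zero₁₂,
    Polynomial.root_mul]

lemma mul_mem_spectrum_of_mul_eq_smul_mul {A : Type*} [Ring A] [Algebra K A] {a u : A} {c : K}
    (hu : IsUnit u) (hc : c ≠ 0) (h : a * u = c • (u * a)) {x : K} (hx : x ∈ spectrum K a) :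
    c * x ∈ spectrum K a := by
  obtain ⟨u, rfl⟩ := hu
  have hconj : (↑u⁻¹ : A) * a * u = c • a := by
    rw [mul_assoc, h, mul_smul_comm, ← mul_assoc, Units.inv_mul, one_mul]
  rw [← spectrum.units_conjugate' (u := u), hconj]
  simpa using spectrum.smul_mem_smul_iff (r := Units.mk0 c hc) |>.mpr hx

lemma eq_setOf_pow_eq_of_mul_mem {S : Set K} {c P : K} {n : ℕ} [NeZero n]
    (hc : IsPrimitiveRoot c n) (hmul : ∀ x ∈ S, c * x ∈ S) (hne : S.Nonempty)
    (hS : S ⊆ {x | x ^ n = P}) : S = {x | x ^ n = P} := by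
  refine hS.antisymm fun x hx => ?_
  obtain ⟨μ, hμ⟩ := hne
  have hpow_mul : ∀ m : ℕ, c ^ m * μ ∈ S := by
    intro m
    induction m with
    | zero => simpa using hμ
    | succ m ih => simpa [pow_succ', mul_assoc] using hmul _ ih
  have hμP : μ ^ n = P := hS hμ
  have hxP : x ^ n = P := hx
  by_cases hμ0 : μ = 0
  · have hx0 : x = 0 := (pow_eq_zero_iff (NeZero.ne n)).mp <| by
      rw [hxP, ← hμP, hμ0, zero_pow (NeZero.ne n)]
    rwa [hx0, ← hμ0]
  · obtain ⟨m, -, hm⟩ := hc.eq_pow_of_pow_eq_one (ξ := x / μ) (by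
      rw [div_pow, hxP, hμP, div_self]
      rwa [← hμP, pow_ne_zero_iff (NeZero.ne n)])
    simpa [hm, hμ0] using hpow_mul m

end Spectrum

lemma spectrum_diagonal_mul_cycleMatrix_pow {p : ℕ} [NeZero p] {k : ℕ} (hk : k.Coprime p)
    (d : Fin p → ℂ) : spectrum ℂ (diagonal d * cycleMatrix p ^ k) = {x | x ^ p = ∏ j, d j} := by
  have hζ := Complex.isPrimitiveRoot_exp p (NeZero.ne p)
  have : Nonempty (Fin p) := ⟨0⟩
  refine eq_setOf_pow_eq_of_mul_mem (hζ.pow_of_coprime k hk) (fun x hx => ?_)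
    (spectrum.nonempty_of_isAlgClosed_of_finiteDimensional ℂ _) fun x hx => ?_
  · refine mul_mem_spectrum_of_mul_eq_smul_mul ?_ (pow_ne_zero _ (hζ.ne_zero (NeZero.ne p)))
      (diagonal_mul_cycleMatrix_pow_mul_diagonal hζ.pow_eq_one d k) hx
    simp [isUnit_diagonal, Pi.isUnit_iff, hζ.ne_zero (NeZero.ne p)]
  · have hxp := spectrum.pow_image_subset _ p ⟨x, hx, rfl⟩
    rwa [diagonal_mul_cycleMatrix_pow_pow_self hk, spectrum.scalar_eq] at hxp

lemma spectrum_tadpole {p : ℕ} [NeZero p] {k : ℕ} (hk : k.Coprime p) (d : Fin p → ℂ)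
    (a : Fin p → ℕ) :
    spectrum ℂ (tadpole p d k a) =
      {x | x ^ p = ∏ j, d j} ∪ Set.range fun j : Fin p => xi p ^ ((j : ℕ) * k + a j * p) := by
  rw [tadpole, spectrum_fromBlocks_zero₁₂, spectrum_diagonal_mul_cycleMatrix_pow hk,
    spectrum_diagonal]

lemma isPrimitiveRoot_xi {p : ℕ} (hp : p ≠ 0) : IsPrimitiveRoot (xi p) (p ^ 2) := by
  simpa [xi] using Complex.isPrimitiveRoot_exp (p ^ 2) (pow_ne_zero 2 hp)

lemma IsPrimitiveRoot.range_fin_pow {R : Type*} [CommRing R] [IsDomain R] {ζ : R} {n : ℕ}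
    [NeZero n] (h : IsPrimitiveRoot ζ n) :
    Set.range (fun m : Fin n => ζ ^ (m : ℕ)) = {x | x ^ n = 1} := by
  ext x
  constructor
  · rintro ⟨m, rfl⟩
    rw [Set.mem_ofPred_eq, ← pow_mul, mul_comm, pow_mul, h.pow_eq_one, one_pow]
  · intro hx
    obtain ⟨m, hm, rfl⟩ := h.eq_pow_of_pow_eq_one hx
    exact ⟨⟨m, hm⟩, rfl⟩

section RootsOfUnity

open Pointwise

variable {K : Type*} [Field K] {p : ℕ} {ξ : K}

lemma setOf_pow_eq_one_union_range_subset {ι : Type*} (hξ : ξ ^ p ^ 2 = 1) (e : ι → ℕ) :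
    {x : K | x ^ p = 1} ∪ Set.range (fun i => ξ ^ e i) ⊆ {x | x ^ p ^ 2 = 1} := by
  rintro _ (hx | ⟨i, rfl⟩)
  · rw [Set.mem_ofPred_eq, sq, pow_mul, hx, one_pow]
  · rw [Set.mem_ofPred_eq, ← pow_mul, mul_comm, pow_mul, hξ, one_pow]

lemma setOf_pow_sq_eq_one_subset_mul [NeZero p] (hξ : IsPrimitiveRoot ξ (p ^ 2)) {ℓ : ℕ}
    (hℓ : ℓ.Coprime p) (e : Fin p → ℕ) :
    {x : K | x ^ p ^ 2 = 1} ⊆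
      {u : K | u ^ p = 1} * Set.range fun j : Fin p => ξ ^ ((j : ℕ) * ℓ + e j * p) := by
  intro x hx
  have hζ : IsPrimitiveRoot ((ξ ^ p) ^ ℓ) p :=
    (hξ.pow (Nat.pos_of_neZero _) (sq p)).pow_of_coprime ℓ hℓ
  obtain ⟨j, hj, hjx⟩ := hζ.eq_pow_of_pow_eq_one (ξ := x ^ p) (by rwa [← pow_mul, ← sq])
  set v := ξ ^ (j * ℓ + e ⟨j, hj⟩ * p)
  -- `ξ ^ p ^ 2 = 1` kills the `e j * p` part of the exponent in the `p`-th power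
  have hvp : v ^ p = x ^ p := by
    rw [← hjx, ← pow_mul, ← pow_mul, ← pow_mul,
      show (j * ℓ + e ⟨j, hj⟩ * p) * p = p * (ℓ * j) + p ^ 2 * e ⟨j, hj⟩ by ring,
      pow_add, pow_mul ξ (p ^ 2), hξ.pow_eq_one, one_pow, mul_one]
  have hx0 : x ≠ 0 := fun h => by simp [h, NeZero.ne p] at hx
  have hv0 : v ≠ 0 := pow_ne_zero _ (hξ.ne_zero (pow_ne_zero 2 (NeZero.ne p)))
  refine ⟨x / v, ?_, v, ⟨⟨j, hj⟩, rfl⟩, div_mul_cancel₀ x hv0⟩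
  rw [Set.mem_ofPred_eq, div_pow, hvp, div_self (pow_ne_zero _ hx0)]

end RootsOfUnity

open Pointwise in
theorem tadpole_spectrum_mul_eq_roots_of_unity_general (p : ℕ) (hp : p.Prime)
    (dA dB : Fin p → ℂ) (k : ℕ) (a b : Fin p → ℕ)
    (hdetA : ∏ i, dA i = 1)
    (hk1 : 1 ≤ k) (hk2 : k ≤ p - 1)
    (hdetB : ∏ i, dB i = 1) :
    spectrum ℂ (tadpole p dA k a) * spectrum ℂ (tadpole p dB (p - k) b) =
      Set.range (fun m : Fin (p ^ 2) => xi p ^ (m : ℕ)) := by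
  have : NeZero p := ⟨hp.ne_zero⟩
  have hξ := isPrimitiveRoot_xi hp.ne_zero
  have hk : k.Coprime p := (Nat.coprime_of_lt_prime (by omega) (by omega) hp).symm
  have hℓ : (p - k).Coprime p := (Nat.coprime_of_lt_prime (by omega) (by omega) hp).symm
  rw [spectrum_tadpole hk, spectrum_tadpole hℓ, hdetA, hdetB, hξ.range_fin_pow]
  refine (Set.mul_subset_iff.mpr fun u hu v hv => ?_).antisymm
    ((setOf_pow_sq_eq_one_subset_mul hξ hℓ b).trans
      (Set.mul_subset_mul Set.subset_union_left Set.subset_union_right))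
  rw [Set.mem_ofPred_eq, mul_pow, setOf_pow_eq_one_union_range_subset hξ.pow_eq_one _ hu,
    setOf_pow_eq_one_union_range_subset hξ.pow_eq_one _ hv, one_mul]

open Pointwise in
/-- If `A`, `B` are tadpole matrices with head parameters `k ≠ 0` and `ℓ = p - k`
(so that `AB` is diagonal), then `σ(A)·σ(B)` is the set of all `p²`-th roots of
unity `{1, ξ, ξ², …, ξ^{p²-1}}`. -/
theorem tadpole_spectrum_mul_eq_roots_of_unity (p : ℕ) (hp : p.Prime) (hodd : Odd p)
    (dA dB : Fin p → ℂ) (k : ℕ) (a b : Fin p → ℕ)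
    (hdA : ∀ i, ‖dA i‖ = 1) (hdetA : ∏ i, dA i = 1)
    (hk1 : 1 ≤ k) (hk2 : k ≤ p - 1)
    (ha : ∀ j, a j < p) (ha0 : ∀ j : Fin p, (j : ℕ) = 0 → a j = 0)
    (hdB : ∀ i, ‖dB i‖ = 1) (hdetB : ∏ i, dB i = 1)
    (hb : ∀ j, b j < p) (hb0 : ∀ j : Fin p, (j : ℕ) = 0 → b j = 0) :
    spectrum ℂ (tadpole p dA k a) * spectrum ℂ (tadpole p dB (p - k) b) =
      Set.range (fun m : Fin (p ^ 2) => xi p ^ (m : ℕ)) :=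
  tadpole_spectrum_mul_eq_roots_of_unity_general p hp dA dB k a b hdetA hk1 hk2 hdetB
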